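/- An ℝ-linear map Δ : A → A is a σ̃-derivation if and only if for every i ∈ X: (1) Δ(e_i)(l) = 0 for all l ∈ X with l ≠ i and l ≠ σ(i), and (2) Δ(e_i)(σ(i)) = −Δ(e_{σ(i)})(σ(i)). -/
import Mathlib


/-- The indicator function of `{i}` in `Fin n → ℝ`. -/
def eFun {n : ℕ} (i : Fin n) : Fin n → ℝ := fun j => if j = i then 1 else 0

lemma eFun_self_mul {n : ℕ} (i : Fin n) : eFun i * eFun i = eFun i := by
  funext l
  by_cases h : l = i <;> simp [eFun, Pi.mul_apply, h]

lemma eFun_mul_ne {n : ℕ} {i j : Fin n} (h : i ≠ j) : eFun i * eFun j = 0 := by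
  funext l; simp [eFun, Pi.mul_apply]
  intro h1 h2; exact absurd (h1 ▸ h2) h.symm

lemma sum_eFun {n : ℕ} (f : Fin n → ℝ) : ∑ i, f i • eFun i = f := by
  funext l
  simp [eFun, Finset.sum_apply]

lemma key {n : ℕ} (σ : Equiv.Perm (Fin n)) (Δ : (Fin n → ℝ) →ₗ[ℝ] (Fin n → ℝ))
    (h : ∀ i : Fin n,
        (∀ l : Fin n, l ≠ i → l ≠ σ i → Δ (eFun i) l = 0) ∧
        Δ (eFun i) (σ i) = - Δ (eFun (σ i)) (σ i)) (i j : Fin n) :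
    Δ (eFun i * eFun j) = (eFun i ∘ ⇑σ.symm) * Δ (eFun j) + Δ (eFun i) * eFun j := by
  funext l
  simp only [Pi.add_apply, Pi.mul_apply, Function.comp_apply]
  by_cases hij : i = j
  · subst hij
    rw [eFun_self_mul]
    by_cases hl : l = i
    · subst hl
      by_cases hσ : σ l = l
      · have h0 : Δ (eFun l) l = 0 := by
          have := (h l).2; rw [hσ] at this; linarith
        have hs : σ.symm l = l := (Equiv.symm_apply_eq σ).2 hσ.symm
        rw [hs, h0]
        simp
      · have hs : σ.symm l ≠ l := by
          intro hc
          have := congrArg σ hc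
          simp at this
          exact hσ this.symm
        have h1 : eFun l (σ.symm l) = 0 := by simp [eFun, hs]
        have h2 : eFun l l = (1 : ℝ) := by simp [eFun]
        rw [h1, h2]; ring
    · by_cases hlσ : l = σ i
      · have hs : σ.symm l = i := by rw [hlσ]; simp
        have h1 : eFun i (σ.symm l) = 1 := by simp [eFun, hs]
        have h2 : eFun i l = (0 : ℝ) := by simp [eFun, hl]
        rw [h1, h2]; ring
      · have h0 : Δ (eFun i) l = 0 := (h i).1 l hl hlσ
        have hs : σ.symm l ≠ i := by
          intro hc
          exact hlσ (by rw [← hc]; simp)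
        have h1 : eFun i (σ.symm l) = 0 := by simp [eFun, hs]
        rw [h0, h1]; ring
  · rw [eFun_mul_ne hij, map_zero]
    simp only [Pi.zero_apply]
    by_cases h1 : σ.symm l = i
    · have hl : l = σ i := by rw [← h1]; simp
      by_cases h2 : l = j
      · have hji : j = σ i := h2 ▸ hl
        have h2' := (h i).2
        rw [← hji] at h2'
        have e1 : eFun i (σ.symm l) = 1 := by simp [eFun, h1]
        have e2 : eFun j l = 1 := by simp [eFun, h2]
        rw [e1, e2, h2]
        rw [h2] at *
        linarith [h2']
      · have h0 : Δ (eFun j) l = 0 := by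
          refine (h j).1 l h2 ?_
          rw [hl]; intro hc
          exact hij (σ.injective hc)
        have e2 : eFun j l = 0 := by simp [eFun, h2]
        rw [h0, e2]; ring
    · by_cases h2 : l = j
      · have h0 : Δ (eFun i) l = 0 := by
          refine (h i).1 l (by rw [h2]; exact fun hc => hij hc.symm) ?_
          intro hc; exact h1 (by rw [hc]; simp)
        have e1 : eFun i (σ.symm l) = 0 := by simp [eFun, h1]
        rw [h0, e1]; ring
      · have e1 : eFun i (σ.symm l) = 0 := by simp [eFun, h1]
        have e2 : eFun j l = 0 := by simp [eFun, h2]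
        rw [e1, e2]; ring

theorem stmt4 (n : ℕ) (hn : 1 ≤ n) (σ : Equiv.Perm (Fin n))
    (Δ : (Fin n → ℝ) →ₗ[ℝ] (Fin n → ℝ)) :
    (∀ f g : Fin n → ℝ, Δ (f * g) = (f ∘ ⇑σ.symm) * Δ g + Δ f * g) ↔
      (∀ i : Fin n,
        (∀ l : Fin n, l ≠ i → l ≠ σ i → Δ (eFun i) l = 0) ∧
        Δ (eFun i) (σ i) = - Δ (eFun (σ i)) (σ i)) := by
  constructor
  · intro H i
    have hsq := H (eFun i) (eFun i)
    rw [eFun_self_mul] at hsq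
    constructor
    · intro l hli hlσ
      have this1 := congrFun hsq l
      have hs : σ.symm l ≠ i := by
        intro hc; exact hlσ (by rw [← hc]; simp)
      rw [Pi.add_apply, Pi.mul_apply, Pi.mul_apply, Function.comp_apply] at this1
      have e1 : eFun i (σ.symm l) = 0 := by simp [eFun, hs]
      have e2 : eFun i l = 0 := by simp [eFun, hli]
      rw [e1, e2] at this1
      linarith
    · by_cases hσ : σ i = i
      · have hs : σ.symm i = i := (Equiv.symm_apply_eq σ).2 hσ.symm
        have this1 := congrFun hsq i
        rw [Pi.add_apply, Pi.mul_apply, Pi.mul_apply, Function.comp_apply, hs] at this1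
        have e2 : eFun i i = (1 : ℝ) := by simp [eFun]
        rw [e2] at this1
        rw [hσ]
        linarith
      · have hz := H (eFun i) (eFun (σ i))
        rw [eFun_mul_ne (fun hc => hσ hc.symm)] at hz
        have this1 := congrFun hz.symm (σ i)
        have hs : σ.symm (σ i) = i := by simp
        rw [Pi.add_apply, Pi.mul_apply, Pi.mul_apply, Function.comp_apply, hs] at this1
        have e1 : eFun i i = (1 : ℝ) := by simp [eFun]
        have e2 : eFun (σ i) (σ i) = (1 : ℝ) := by simp [eFun]
        rw [e1, e2] at this1
        simp only [map_zero, Pi.zero_apply] at this1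
        linarith
  · intro h f g
    have hf := sum_eFun f
    have hg := sum_eFun g
    calc Δ (f * g) = Δ ((∑ i, f i • eFun i) * (∑ j, g j • eFun j)) := by rw [hf, hg]
      _ = ∑ i, ∑ j, (f i * g j) • Δ (eFun i * eFun j) := by
          rw [Finset.sum_mul_sum]
          rw [map_sum]
          refine Finset.sum_congr rfl fun i _ => ?_
          rw [map_sum]
          refine Finset.sum_congr rfl fun j _ => ?_
          rw [smul_mul_smul_comm, map_smul]
      _ = ∑ i, ∑ j, (f i * g j) • ((eFun i ∘ ⇑σ.symm) * Δ (eFun j) + Δ (eFun i) * eFun j) := by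
          refine Finset.sum_congr rfl fun i _ => Finset.sum_congr rfl fun j _ => ?_
          rw [key σ Δ h]
      _ = (f ∘ ⇑σ.symm) * Δ g + Δ f * g := by
          funext l
          have hΔg : Δ g l = ∑ j, g j * Δ (eFun j) l := by
            conv_lhs => rw [← hg]
            rw [map_sum, Finset.sum_apply]
            exact Finset.sum_congr rfl fun j _ => by simp
          have hΔf : Δ f l = ∑ i, f i * Δ (eFun i) l := by
            conv_lhs => rw [← hf]
            rw [map_sum, Finset.sum_apply]
            exact Finset.sum_congr rfl fun i _ => by simp
          have hfs : f (σ.symm l) = ∑ i, f i * eFun i (σ.symm l) := by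
            conv_lhs => rw [← hf]
            rw [Finset.sum_apply]
            exact Finset.sum_congr rfl fun i _ => by simp
          have hgl : g l = ∑ j, g j * eFun j l := by
            conv_lhs => rw [← hg]
            rw [Finset.sum_apply]
            exact Finset.sum_congr rfl fun j _ => by simp
          simp only [Finset.sum_apply, Pi.add_apply, Pi.mul_apply, Pi.smul_apply,
            Function.comp_apply, smul_eq_mul]
          rw [hΔg, hΔf, hfs, hgl, Finset.sum_mul_sum, Finset.sum_mul_sum,
            ← Finset.sum_add_distrib]
          refine Finset.sum_congr rfl fun i _ => ?_
          rw [← Finset.sum_add_distrib]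
          refine Finset.sum_congr rfl fun j _ => ?_
          ring
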